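/- Let G be a tournament, p a vertex not contained in any directed triangle of G, and let R⁻ and R⁺ be minimum-weight FVSs of G[N⁻(p)] and G[N⁺(p)] respectively (with respect to a weight function w). Then R⁻ ∪ R⁺ is a minimum-weight p-disjoint FVS of G. -/

import Mathlib

open Finset

variable {V : Type*}

/-- A digraph (given by its arc relation) is acyclic if no vertex lies on a directed cycle. -/
def Acyclic (E : V → V → Prop) : Prop := ∀ v, ¬ Relation.TransGen E v v

/-- The digraph obtained by deleting the vertex set `X`. -/
def Delete [DecidableEq V] (E : V → V → Prop) (X : Finset V) : V → V → Prop :=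
  fun a b => a ∉ X ∧ b ∉ X ∧ E a b

/-- The subgraph induced on the vertex set `A`. -/
def Induce [DecidableEq V] (E : V → V → Prop) (A : Finset V) : V → V → Prop :=
  fun a b => a ∈ A ∧ b ∈ A ∧ E a b

/-- `S` is a feedback vertex set of the digraph `E`. -/
def IsFVS [DecidableEq V] (E : V → V → Prop) (S : Finset V) : Prop :=
  Acyclic (Delete E S)

/-- A tournament: no self-loops and exactly one arc between any two distinct vertices. -/
def IsTournament (E : V → V → Prop) : Prop :=
  (∀ v, ¬ E v v) ∧ ∀ u v, u ≠ v → (E u v ↔ ¬ E v u)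

/-- Weight of a vertex set. -/
def weight (w : V → ℕ) (S : Finset V) : ℕ := ∑ v ∈ S, w v

/-- Out-neighborhood. -/
def Nout [Fintype V] [DecidableEq V] (E : V → V → Prop) [DecidableRel E] (p : V) : Finset V :=
  Finset.univ.filter (fun u => E p u)

/-- In-neighborhood. -/
def Nin [Fintype V] [DecidableEq V] (E : V → V → Prop) [DecidableRel E] (p : V) : Finset V :=
  Finset.univ.filter (fun u => E u p)

/-- `S` is a minimum-weight FVS of `(E, w)`. -/
def IsOptFVS [DecidableEq V] (E : V → V → Prop) (w : V → ℕ) (S : Finset V) : Prop :=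
  IsFVS E S ∧ ∀ S', IsFVS E S' → weight w S ≤ weight w S'

/-- `S` is a `p`-disjoint FVS of `E`. -/
def IsPDisjFVS [DecidableEq V] (E : V → V → Prop) (p : V) (S : Finset V) : Prop :=
  IsFVS E S ∧ p ∉ S

/-- `S` is a minimum-weight `p`-disjoint FVS of `(E, w)`. -/
def IsOptPDisjFVS [DecidableEq V] (E : V → V → Prop) (w : V → ℕ) (p : V) (S : Finset V) : Prop :=
  IsPDisjFVS E p S ∧ ∀ S', IsPDisjFVS E p S' → weight w S ≤ weight w S'

/-- `S` is a 2-approximate solution of `(E, w)`. -/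
def TwoApproxFVS [DecidableEq V] (E : V → V → Prop) (w : V → ℕ) (S : Finset V) : Prop :=
  IsFVS E S ∧ ∀ S', IsOptFVS E w S' → weight w S ≤ 2 * weight w S'

/-- `S` is a 2-approximate `p`-disjoint solution of `(E, w)`. -/
def TwoApproxPDisj [DecidableEq V] (E : V → V → Prop) (w : V → ℕ) (p : V) (S : Finset V) : Prop :=
  IsPDisjFVS E p S ∧ ∀ S', IsOptPDisjFVS E w p S' → weight w S ≤ 2 * weight w S'

/-- `l` is a topological sort of the subgraph of `E` induced on the vertex set `A`. -/
def IsTopoOn [DecidableEq V] (E : V → V → Prop) (A : Finset V) (l : List V) : Prop :=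
  l.Nodup ∧ (∀ v, v ∈ l ↔ v ∈ A) ∧
    ∀ (i j : ℕ) (hi : i < l.length) (hj : j < l.length),
      E (l.get ⟨i, hi⟩) (l.get ⟨j, hj⟩) → i < j

/-! Since `p` lies in no directed triangle, `N⁻(p)` is closed under taking in-neighbours and
`N⁺(p)` under taking out-neighbours, so every cycle of `G - p` lies inside one of them and no
cycle passes through `p`. Hence `R⁻ ∪ R⁺` meets every cycle; conversely any FVS `S` restricts to
FVSs `S ∩ N⁻(p)`, `S ∩ N⁺(p)` of the two disjoint neighbourhoods, so it weighs at least
`w(R⁻) + w(R⁺)`. -/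

open Relation

theorem Relation.TransGen.exists_rel_and_transGen_self {α : Type*} {r : α → α → Prop}
    {a : α} (h : TransGen r a a) : ∃ c, r a c ∧ TransGen r c c := by
  obtain ⟨c, hac, hca⟩ := TransGen.head'_iff.mp h
  exact ⟨c, hac, TransGen.tail' hca hac⟩

section FVS

variable [DecidableEq V] {E : V → V → Prop}

theorem transGen_delete_induce_of_predClosed {A X : Finset V}
    (hA : ∀ a b, E a b → b ∈ A → a ∈ A) {a b : V} (h : TransGen (Delete E X) a b)
    (hb : b ∈ A) :
    TransGen (Delete (Induce E A) X) a b := by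
  induction h with
  | single hab => exact .single ⟨hab.1, hab.2.1, hA _ _ hab.2.2 hb, hb, hab.2.2⟩
  | tail _ hcb ih =>
    have hc := hA _ _ hcb.2.2 hb
    exact (ih hc).tail ⟨hcb.1, hcb.2.1, hc, hb, hcb.2.2⟩

theorem transGen_delete_induce_of_succClosed {A X : Finset V}
    (hA : ∀ a b, E a b → a ∈ A → b ∈ A) {a b : V} (h : TransGen (Delete E X) a b)
    (ha : a ∈ A) :
    TransGen (Delete (Induce E A) X) a b := by
  induction h using TransGen.head_induction_on with
  | single hab => exact .single ⟨hab.1, hab.2.1, ha, hA _ _ hab.2.2 ha, hab.2.2⟩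
  | head hac _ ih =>
    have hc := hA _ _ hac.2.2 ha
    exact (ih hc).head ⟨hac.1, hac.2.1, ha, hc, hac.2.2⟩

theorem transGen_delete_of_subset {X Y : Finset V} (hXY : X ⊆ Y) {a b : V}
    (h : TransGen (Delete E Y) a b) : TransGen (Delete E X) a b :=
  TransGen.mono (fun _ _ ⟨ha, hb, hab⟩ => ⟨fun h => ha (hXY h), fun h => hb (hXY h), hab⟩)
    _ _ h

theorem IsFVS.union_of_closed {A B X Y : Finset V}
    (hA : ∀ a b, E a b → b ∈ A → a ∈ A) (hB : ∀ a b, E a b → a ∈ B → b ∈ B)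
    (hout : ∀ v, v ∉ A → ∀ u, E v u → u ∈ B)
    (hX : IsFVS (Induce E A) X) (hY : IsFVS (Induce E B) Y) : IsFVS E (X ∪ Y) := by
  intro v hv
  by_cases hvA : v ∈ A
  · exact hX v (transGen_delete_induce_of_predClosed hA
      (transGen_delete_of_subset subset_union_left hv) hvA)
  · -- a cycle leaving `v` enters `B` at once; rotate it to start there
    obtain ⟨c, hvc, hc⟩ := hv.exists_rel_and_transGen_self
    exact hY c (transGen_delete_induce_of_succClosed hB
      (transGen_delete_of_subset subset_union_right hc) (hout v hvA c hvc.2.2))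

theorem IsFVS.inter_induce {S : Finset V} (hS : IsFVS E S) (A : Finset V) :
    IsFVS (Induce E A) (S ∩ A) := fun v hv =>
  hS v <| TransGen.mono (fun _ _ ⟨ha, hb, haA, hbA, hab⟩ =>
    ⟨fun h => ha (mem_inter.mpr ⟨h, haA⟩), fun h => hb (mem_inter.mpr ⟨h, hbA⟩), hab⟩) _ _ hv

theorem weight_union_le_of_isOptFVS {w : V → ℕ} {A B X Y S : Finset V} (hAB : Disjoint A B)
    (hXA : X ⊆ A) (hYB : Y ⊆ B) (hX : IsOptFVS (Induce E A) w X)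
    (hY : IsOptFVS (Induce E B) w Y) (hS : IsFVS E S) : weight w (X ∪ Y) ≤ weight w S := by
  have hSAB : Disjoint (S ∩ A) (S ∩ B) := hAB.mono inter_subset_right inter_subset_right
  calc weight w (X ∪ Y) = weight w X + weight w Y := sum_union (hAB.mono hXA hYB)
    _ ≤ weight w (S ∩ A) + weight w (S ∩ B) :=
        add_le_add (hX.2 _ (hS.inter_induce A)) (hY.2 _ (hS.inter_induce B))
    _ = weight w (S ∩ A ∪ S ∩ B) := (sum_union hSAB).symm
    _ ≤ weight w S :=
        sum_le_sum_of_subset (union_subset inter_subset_left inter_subset_left)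

end FVS

section Neighbourhoods

variable [Fintype V] [DecidableEq V] {E : V → V → Prop} [DecidableRel E] {p v : V}

@[simp] theorem mem_nin : v ∈ Nin E p ↔ E v p := by simp [Nin]

@[simp] theorem mem_nout : v ∈ Nout E p ↔ E p v := by simp [Nout]

end Neighbourhoods

namespace IsTournament

variable {E : V → V → Prop}

theorem asymm (hT : IsTournament E) {a b : V} (h : E a b) : ¬ E b a := by
  by_cases hab : a = b
  · subst hab
    exact absurd h (hT.1 a)
  · exact (hT.2 a b hab).mp h

theorem rel_of_not_rel (hT : IsTournament E) {a b : V} (hab : a ≠ b) (h : ¬ E a b) : E b a :=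
  (hT.2 b a hab.symm).mpr h

variable [Fintype V] [DecidableEq V] [DecidableRel E]

theorem not_mem_nin (hT : IsTournament E) (p : V) : p ∉ Nin E p := by
  simpa using hT.1 p

theorem not_mem_nout (hT : IsTournament E) (p : V) : p ∉ Nout E p := by
  simpa using hT.1 p

theorem disjoint_nin_nout (hT : IsTournament E) (p : V) : Disjoint (Nin E p) (Nout E p) :=
  disjoint_left.mpr fun _ hvp hpv => hT.asymm (mem_nin.mp hvp) (mem_nout.mp hpv)

theorem nin_predClosed (hT : IsTournament E) {p : V} (hp : ¬ ∃ a b, E p a ∧ E a b ∧ E b p) :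
    ∀ a b, E a b → b ∈ Nin E p → a ∈ Nin E p := by
  simp only [mem_nin]
  intro a b hab hbp
  by_contra hap
  have ha : a ≠ p := by
    rintro rfl
    exact hT.asymm hab hbp
  exact hp ⟨a, b, hT.rel_of_not_rel ha hap, hab, hbp⟩

theorem nout_succClosed (hT : IsTournament E) {p : V} (hp : ¬ ∃ a b, E p a ∧ E a b ∧ E b p) :
    ∀ a b, E a b → a ∈ Nout E p → b ∈ Nout E p := by
  simp only [mem_nout]
  intro a b hab hpa
  by_contra hpb
  have hb : p ≠ b := by
    rintro rfl
    exact hT.asymm hpa hab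
  exact hp ⟨a, b, hpa, hab, hT.rel_of_not_rel hb hpb⟩

theorem mem_nout_of_rel_of_not_mem_nin (hT : IsTournament E) {p : V}
    (hp : ¬ ∃ a b, E p a ∧ E a b ∧ E b p) {v : V} (hv : v ∉ Nin E p) {u : V} (hvu : E v u) :
    u ∈ Nout E p := by
  by_cases hvp : v = p
  · subst hvp
    exact mem_nout.mpr hvu
  · have hpv : E p v := hT.rel_of_not_rel hvp (mem_nin.not.mp hv)
    exact hT.nout_succClosed hp v u hvu (mem_nout.mpr hpv)

end IsTournament

theorem stmt9 [Fintype V] [DecidableEq V] (E : V → V → Prop) [DecidableRel E]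
    (hT : IsTournament E) (w : V → ℕ) (p : V)
    (hp : ¬ ∃ a b, E p a ∧ E a b ∧ E b p)
    (Rm Rp : Finset V) (hRm : Rm ⊆ Nin E p) (hRp : Rp ⊆ Nout E p)
    (hoptm : IsOptFVS (Induce E (Nin E p)) w Rm)
    (hoptp : IsOptFVS (Induce E (Nout E p)) w Rp) :
    IsOptPDisjFVS E w p (Rm ∪ Rp) := by
  have hfvs : IsFVS E (Rm ∪ Rp) :=
    IsFVS.union_of_closed (hT.nin_predClosed hp) (hT.nout_succClosed hp)
      (fun _ hv _ => hT.mem_nout_of_rel_of_not_mem_nin hp hv) hoptm.1 hoptp.1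
  have hpR : p ∉ Rm ∪ Rp := by
    rw [mem_union, not_or]
    exact ⟨fun h => hT.not_mem_nin p (hRm h), fun h => hT.not_mem_nout p (hRp h)⟩
  exact ⟨⟨hfvs, hpR⟩, fun S hS =>
    weight_union_le_of_isOptFVS (hT.disjoint_nin_nout p) hRm hRp hoptm hoptp hS.1⟩
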